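/- arXiv:1801.10489 — 3 statements merged into one kernel-verified Lean document; each statement's English description precedes it below -/
import Mathlib

section
/- For positive integers $d_1 \le d_2 \le \cdots \le d_s$ with all $d_j \ge 2$, and integers $l \ge s$ and $r \ge 1$, one has $\sum_{t_1=0}^{d_1-1}\cdots\sum_{t_s=0}^{d_s-1}\binom{r-t_1-\cdots-t_s+l-s}{l-s} \ge \binom{r+l-s}{r}+s$, where binomial coefficients $\binom{m}{k}$ with $m<k$ are interpreted as $0$. -/
/-- Combinatorial inequality: for `2 ≤ d_1 ≤ … ≤ d_s`, `l ≥ s` and `r ≥ 1`,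
`∑_{0 ≤ t_j < d_j} C(r - ∑ t_j + l - s, l - s) ≥ C(r + l - s, r) + s`,
with the convention that terms whose top argument would be negative vanish. -/
theorem stmt_2 (s l r : ℕ) (d : Fin s → ℕ) (hd : ∀ j, 2 ≤ d j) (hmono : Monotone d)
    (hsl : s ≤ l) (hr : 1 ≤ r) :
    (r + (l - s)).choose r + s ≤
      ∑ t : (Π j : Fin s, Fin (d j)),
        if (∑ j, (t j : ℕ)) ≤ r then (r - (∑ j, (t j : ℕ)) + (l - s)).choose (l - s)
        else 0 := by
  set m := l - s with hm
  set f : (Π j : Fin s, Fin (d j)) → ℕ := fun t =>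
    if (∑ j, (t j : ℕ)) ≤ r then (r - (∑ j, (t j : ℕ)) + m).choose m else 0 with hf
  have hz : ∀ j : Fin s, 0 < d j := fun j => lt_of_lt_of_le (by norm_num) (hd j)
  set z : Π j : Fin s, Fin (d j) := fun j => ⟨0, hz j⟩ with hzdef
  set e : Fin s → Π j : Fin s, Fin (d j) := fun j k =>
    ⟨if k = j then 1 else 0, by have := hd k; split <;> omega⟩ with he
  have hesum : ∀ j : Fin s, (∑ k, ((e j k : ℕ))) = 1 := by
    intro j
    simp only [he]
    rw [Finset.sum_ite_eq' Finset.univ j (fun _ => 1)]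
    simp
  have hfe : ∀ j : Fin s, 1 ≤ f (e j) := by
    intro j
    simp only [hf, hesum j, hr, if_true]
    exact Nat.choose_pos (by omega)
  have hzsum : (∑ k, ((z k : ℕ))) = 0 := by simp [hzdef]
  have hfz : f z = (r + m).choose r := by
    simp only [hf, hzsum, Nat.sub_zero, if_pos (Nat.zero_le r)]
    have h1 : (r + m).choose r = (r + m).choose (r + m - r) :=
      (Nat.choose_symm (Nat.le_add_right r m)).symm
    rw [h1]
    congr 1
    omega
  have heinj : Function.Injective e := by
    intro a b hab
    by_contra hne
    have h := congrArg (fun t => ((t a : ℕ))) hab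
    simp [he, hne] at h
  have hznot : z ∉ Finset.univ.image e := by
    simp only [Finset.mem_image]
    rintro ⟨j, -, hj⟩
    have h := congrArg (fun t => ((t j : ℕ))) hj
    simp [he, hzdef] at h
  calc (r + m).choose r + s
      ≤ f z + ∑ j : Fin s, f (e j) := by
        rw [hfz]
        gcongr
        calc s = ∑ _j : Fin s, 1 := by simp
          _ ≤ ∑ j : Fin s, f (e j) := Finset.sum_le_sum (fun j _ => hfe j)
    _ = ∑ t ∈ insert z (Finset.univ.image e), f t := by
        rw [Finset.sum_insert hznot, Finset.sum_image (fun a _ b _ h => heinj h)]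
    _ ≤ ∑ t : (Π j : Fin s, Fin (d j)), f t :=
        Finset.sum_le_sum_of_subset (Finset.subset_univ _)
end

section
/- Consider the bigraded polynomial ring $S = \mathbb{C}[x_0,\ldots,x_N,w_1]$ with $\deg x_i = (0,1)$ and $\deg w_1 = (1,-2)$. Let $F = w_1 \cdot (x_0^2 + \cdots + x_N^2)$ and let $J$ be the ideal generated by $\partial F/\partial w_1$ and all $\partial F/\partial x_i$. Let $R = S/J$ with the inherited bigrading. Then for $q \ge 1$ and $i > 0$, $\dim R_{q,-i} = 1$ if $i = 2q$, and $\dim R_{q,-i} = 0$ otherwise. -/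
open MvPolynomial

private noncomputable abbrev wtQ (N : ℕ) : Fin (N+1) ⊕ Fin 1 → ℤ × ℤ :=
  Sum.elim (fun _ => ((0:ℤ),(1:ℤ))) (fun _ => ((1:ℤ),(-2:ℤ)))

private noncomputable abbrev FQ (N : ℕ) : MvPolynomial (Fin (N+1) ⊕ Fin 1) ℂ :=
  X (Sum.inr 0) * ∑ j : Fin (N+1), X (Sum.inl j) ^ 2

private noncomputable abbrev JQ (N : ℕ) : Ideal (MvPolynomial (Fin (N+1) ⊕ Fin 1) ℂ) :=
  Ideal.span (Set.range fun s : Fin (N+1) ⊕ Fin 1 => pderiv s (FQ N))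

private lemma weight_eq (N : ℕ) (d : Fin (N+1) ⊕ Fin 1 →₀ ℕ) :
    Finsupp.weight (wtQ N) d =
      ((d (Sum.inr 0) : ℤ), (∑ j, (d (Sum.inl j) : ℤ)) - 2 * d (Sum.inr 0)) := by
  rw [Finsupp.weight_apply, Finsupp.sum_fintype _ _ (by simp)]
  simp [Fintype.sum_sum_type, Prod.ext_iff, mul_comm, Prod.fst_sum, Prod.snd_sum,
    sub_eq_add_neg]

private lemma pderiv_inl (N : ℕ) (j : Fin (N+1)) :
    pderiv (Sum.inl j) (FQ N) = 2 * X (Sum.inr 0) * X (Sum.inl j) := by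
  simp [pderiv_X, Pi.single_apply, mul_ite, ite_mul, Finset.sum_ite_eq']
  ring

private lemma pderiv_inr (N : ℕ) :
    pderiv (Sum.inr 0) (FQ N) = ∑ j : Fin (N+1), X (Sum.inl j) ^ 2 := by
  simp [pderiv_X, Finsupp.single_apply]

private lemma XwXj_mem (N : ℕ) (j : Fin (N+1)) :
    X (Sum.inr 0) * X (Sum.inl j) ∈ JQ N := by
  have hg : pderiv (Sum.inl j) (FQ N) ∈ JQ N :=
    Ideal.subset_span ⟨Sum.inl j, rfl⟩
  have hC : (C (2⁻¹:ℂ) : MvPolynomial (Fin (N+1) ⊕ Fin 1) ℂ) * 2 = 1 := by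
    rw [show (2 : MvPolynomial (Fin (N+1) ⊕ Fin 1) ℂ) = C (2:ℂ) from (map_ofNat C 2).symm,
      ← map_mul]
    norm_num
  have h2 : (X (Sum.inr 0) * X (Sum.inl j) : MvPolynomial (Fin (N+1) ⊕ Fin 1) ℂ)
      = C (2⁻¹ : ℂ) * pderiv (Sum.inl j) (FQ N) := by
    rw [pderiv_inl]
    linear_combination (-(X (Sum.inr 0) * X (Sum.inl j)) :
      MvPolynomial (Fin (N+1) ⊕ Fin 1) ℂ) * hC
  rw [h2]
  exact Ideal.mul_mem_left _ _ hg

private lemma mono_mem (N : ℕ) (d : Fin (N+1) ⊕ Fin 1 →₀ ℕ)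
    (hw : 1 ≤ d (Sum.inr 0)) (j : Fin (N+1)) (hj : 1 ≤ d (Sum.inl j)) (c : ℂ) :
    monomial d c ∈ JQ N := by
  set e : Fin (N+1) ⊕ Fin 1 →₀ ℕ :=
    Finsupp.single (Sum.inr 0) 1 + Finsupp.single (Sum.inl j) 1 with he
  have hle : e ≤ d := by
    intro s
    rcases s with s | s
    · have h1 : e (Sum.inl s) = if j = s then 1 else 0 := by
        simp [e, Finsupp.single_apply]
      rw [h1]
      split_ifs with h2
      · subst h2; exact hj
      · omega
    · have h0 : s = 0 := Subsingleton.elim _ _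
      subst h0
      have h1 : e (Sum.inr 0) = 1 := by simp [e, Finsupp.single_apply]
      rw [h1]; exact hw
  have key : monomial d c = (X (Sum.inr 0) * X (Sum.inl j)) * monomial (d - e) c := by
    rw [X, X, monomial_mul, monomial_mul, one_mul, one_mul, ← he,
      add_tsub_cancel_of_le hle]
  rw [key]
  exact Ideal.mul_mem_right _ _ (XwXj_mem N j)

private lemma Xw_pow_not_mem (N q : ℕ) :
    (X (Sum.inr 0) : MvPolynomial (Fin (N+1) ⊕ Fin 1) ℂ) ^ q ∉ JQ N := by
  intro h
  have hker : JQ N ≤ RingHom.ker (eval (Sum.elim (fun _ => (0:ℂ)) (fun _ => 1))) := by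
    rw [Ideal.span_le]
    rintro _ ⟨s, rfl⟩
    rcases s with j | s
    · simp only [SetLike.mem_coe, RingHom.mem_ker, pderiv_inl]
      simp
    · have h0 : s = 0 := Subsingleton.elim _ _
      subst h0
      simp only [SetLike.mem_coe, RingHom.mem_ker, pderiv_inr]
      simp
  have h1 := hker h
  rw [RingHom.mem_ker] at h1
  simp at h1

private lemma W_le_span (N q : ℕ) (p : MvPolynomial (Fin (N+1) ⊕ Fin 1) ℂ)
    (hp : p.IsWeightedHomogeneous (wtQ N) ((q:ℤ), -((2*q:ℕ):ℤ))) :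
    p ∈ Submodule.span ℂ {monomial (Finsupp.single (Sum.inr 0) q) (1:ℂ)} := by
  set d0 : Fin (N+1) ⊕ Fin 1 →₀ ℕ := Finsupp.single (Sum.inr 0) q with hd0
  have hps : ∀ e, coeff e p ≠ 0 → e = d0 := by
    intro e he
    have h := hp he
    rw [weight_eq] at h
    obtain ⟨h1, h2⟩ := Prod.mk.inj h
    have hq : e (Sum.inr 0) = q := by exact_mod_cast h1
    rw [hq] at h2
    have hsum : ∑ j, (e (Sum.inl j) : ℤ) = 0 := by omega
    have hz : ∀ j : Fin (N+1), e (Sum.inl j) = 0 := by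
      intro j
      have := (Finset.sum_eq_zero_iff_of_nonneg
        (fun j _ => by positivity : ∀ j ∈ Finset.univ, (0:ℤ) ≤ (e (Sum.inl j) : ℤ))).mp hsum
      exact_mod_cast this j (Finset.mem_univ j)
    ext s
    rcases s with s | s
    · simp [d0, Finsupp.single_apply, hz s]
    · have h0 : s = 0 := Subsingleton.elim _ _
      subst h0
      simp [d0, Finsupp.single_apply, hq]
  have hpeq : p = monomial d0 (coeff d0 p) := by
    ext e
    rw [coeff_monomial]
    split_ifs with h
    · subst h; rfl
    · by_contra hne
      exact h (hps e hne).symm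
  rw [hpeq]
  exact Submodule.mem_span_singleton.mpr
    ⟨coeff d0 p, by rw [smul_monomial, smul_eq_mul, mul_one]⟩

/-- The bigraded Jacobian ring of the quadric `x_0^2 + ⋯ + x_N^2`:
in `S = ℂ[x_0,…,x_N,w]` with `deg x_i = (0,1)`, `deg w = (1,-2)`,
`F = w·(x_0^2+⋯+x_N^2)`, `J` the ideal of partial derivatives of `F`,
`R = S/J`, one has `dim R_{q,-i} = 1` if `i = 2q` and `0` otherwise,
for all `q ≥ 1`, `i > 0`. -/
theorem stmt_10 (N : ℕ) (q i : ℕ) (hq : 1 ≤ q) (hi : 0 < i) :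
    Module.finrank ℂ
      (Submodule.map
        (Ideal.Quotient.mkₐ ℂ
          (Ideal.span (Set.range fun s : Fin (N + 1) ⊕ Fin 1 =>
            pderiv s
              ((X (Sum.inr 0) * ∑ j : Fin (N + 1), X (Sum.inl j) ^ 2 :
                MvPolynomial (Fin (N + 1) ⊕ Fin 1) ℂ))))).toLinearMap
        (weightedHomogeneousSubmodule ℂ
          (Sum.elim (fun _ : Fin (N + 1) => ((0 : ℤ), (1 : ℤ)))
            (fun _ : Fin 1 => ((1 : ℤ), (-2 : ℤ))))
          ((q : ℤ), -(i : ℤ)))) =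
      if i = 2 * q then 1 else 0 := by
  by_cases hcase : i = 2 * q
  · subst hcase
    rw [if_pos rfl]
    have hWeq : weightedHomogeneousSubmodule ℂ (wtQ N) (((q:ℤ), -((2*q:ℕ):ℤ)))
        = Submodule.span ℂ {monomial (Finsupp.single (Sum.inr 0) q) (1:ℂ)} := by
      apply le_antisymm
      · intro p hp
        exact W_le_span N q p ((mem_weightedHomogeneousSubmodule _ _ _ _).mp hp)
      · rw [Submodule.span_le, Set.singleton_subset_iff]
        rw [SetLike.mem_coe, mem_weightedHomogeneousSubmodule]
        apply isWeightedHomogeneous_monomial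
        rw [weight_eq]
        simp [Finsupp.single_apply]
    rw [show (weightedHomogeneousSubmodule ℂ
          (Sum.elim (fun _ : Fin (N + 1) => ((0 : ℤ), (1 : ℤ)))
            (fun _ : Fin 1 => ((1 : ℤ), (-2 : ℤ))))
          ((q : ℤ), -((2*q : ℕ) : ℤ)))
        = Submodule.span ℂ {monomial (Finsupp.single (Sum.inr 0) q) (1:ℂ)} from hWeq]
    rw [Submodule.map_span, Set.image_singleton]
    rw [show Submodule.span ℂ {((Ideal.Quotient.mkₐ ℂ (JQ N)).toLinearMap
        (monomial (Finsupp.single (Sum.inr 0) q) (1:ℂ)))} =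
        ℂ ∙ ((Ideal.Quotient.mkₐ ℂ (JQ N)).toLinearMap
        (monomial (Finsupp.single (Sum.inr 0) q) (1:ℂ))) from rfl]
    rw [finrank_span_singleton]
    intro h0
    have hmem : (monomial (Finsupp.single (Sum.inr 0) q) (1:ℂ)) ∈ JQ N := by
      rwa [AlgHom.toLinearMap_apply, Ideal.Quotient.mkₐ_eq_mk,
        Ideal.Quotient.eq_zero_iff_mem] at h0
    rw [← X_pow_eq_monomial] at hmem
    exact Xw_pow_not_mem N q hmem
  · rw [if_neg hcase]
    have hmap : Submodule.map (Ideal.Quotient.mkₐ ℂ (JQ N)).toLinearMap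
        (weightedHomogeneousSubmodule ℂ (wtQ N) ((q:ℤ), -(i:ℤ))) = ⊥ := by
      rw [Submodule.eq_bot_iff]
      rintro x ⟨p, hp, rfl⟩
      replace hp : p.IsWeightedHomogeneous (wtQ N) ((q:ℤ), -(i:ℤ)) := hp
      rw [AlgHom.toLinearMap_apply, Ideal.Quotient.mkₐ_eq_mk,
        Ideal.Quotient.eq_zero_iff_mem]
      rcases lt_or_gt_of_ne hcase with hlt | hgt
      · -- i < 2q : every monomial divisible by w·x_j
        rw [p.as_sum]
        apply Ideal.sum_mem
        intro d hd
        have hc : coeff d p ≠ 0 := mem_support_iff.mp hd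
        have h := hp hc
        rw [weight_eq] at h
        obtain ⟨h1, h2⟩ := Prod.mk.inj h
        have hw : d (Sum.inr 0) = q := by exact_mod_cast h1
        rw [hw] at h2
        have hsum : ∑ j, (d (Sum.inl j) : ℤ) = 2*q - i := by omega
        have hex : ∃ j : Fin (N+1), 1 ≤ d (Sum.inl j) := by
          by_contra hno
          push_neg at hno
          have hz : ∀ j : Fin (N+1), d (Sum.inl j) = 0 := fun j => by have := hno j; omega
          rw [Finset.sum_eq_zero (fun j _ => by rw [hz j]; simp)] at hsum
          omega
        obtain ⟨j, hj⟩ := hex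
        exact mono_mem N d (by omega) j hj _
      · -- i > 2q : the graded piece is zero
        have hp0 : p = 0 := by
          ext e
          rw [coeff_zero]
          by_contra he
          have h := hp he
          rw [weight_eq] at h
          obtain ⟨h1, h2⟩ := Prod.mk.inj h
          have hw : e (Sum.inr 0) = q := by exact_mod_cast h1
          rw [hw] at h2
          have hs : (0:ℤ) ≤ ∑ j, (e (Sum.inl j) : ℤ) :=
            Finset.sum_nonneg fun j _ => by positivity
          have : (i:ℤ) < 2*q := by omega
          exact_mod_cast absurd this (by exact_mod_cast not_lt.mpr hgt.le)
        rw [hp0]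
        exact zero_mem _
    rw [hmap]
    exact finrank_bot ℂ _
end

section
/- Let $a_0 \le \cdots \le a_N$ and $d_1 \le \cdots \le d_k$ be positive integers with $d_k = 2$, such that no $a_i$ equals any $d_j$, and such that for every $t$ and every choice of $t$ weights with gcd $\delta > 1$ there exist $t$ degrees whose gcd is divisible by $\delta$. Then $a_i = 1$ for all $i$. -/
/-- Lemma 3.1(i): if `a_0 ≤ … ≤ a_N` and `d_1 ≤ … ≤ d_k` are positive integers with
`d_k = 2`, no `a_i` equals any `d_j`, and for every choice of `t ≤ k` weights with
gcd `δ > 1` there exist `t` degrees whose gcd is divisible by `δ`, then all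
`a_i = 1`. -/
theorem stmt_15 (N k : ℕ)
    (a : Fin (N + 1) → ℕ) (ha : ∀ i, 0 < a i) (hamono : Monotone a)
    (d : Fin (k + 1) → ℕ) (hd : ∀ j, 0 < d j) (hdmono : Monotone d)
    (hdk : d (Fin.last k) = 2)
    (hnotlin : ∀ i j, a i ≠ d j)
    (hdivis : ∀ I : Finset (Fin (N + 1)), I.Nonempty → I.card ≤ k + 1 →
      1 < I.gcd a →
      ∃ J : Finset (Fin (k + 1)), J.card = I.card ∧ I.gcd a ∣ J.gcd d) :
    ∀ i, a i = 1 := by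
  intro i
  by_contra hne
  have hai : 1 < a i := lt_of_le_of_ne (ha i) (Ne.symm hne)
  have hgcd : ({i} : Finset (Fin (N + 1))).gcd a = a i := by simp [Finset.gcd_singleton]
  obtain ⟨J, hJcard, hJdvd⟩ := hdivis {i} (Finset.singleton_nonempty i)
    (by simp) (by rw [hgcd]; exact hai)
  rw [Finset.card_singleton] at hJcard
  obtain ⟨j, hJ⟩ := Finset.card_eq_one.mp hJcard
  rw [hgcd, hJ, Finset.gcd_singleton] at hJdvd
  simp only [normalize_eq] at hJdvd
  have hdj2 : d j ≤ 2 := hdk ▸ hdmono (Fin.le_last j)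
  have h2 : 2 ≤ d j := le_trans hai (Nat.le_of_dvd (hd j) hJdvd)
  have : a i = d j := by
    have : d j = 2 := le_antisymm hdj2 h2
    have hai2 : a i = 2 := le_antisymm (this ▸ Nat.le_of_dvd (hd j) hJdvd) hai
    omega
  exact hnotlin i j this
end
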